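/- Fix w* > 0 and γ ∈ (1, 2), let T(w) = w - (γ/σ'(w*))·(σ(w) - σ(w*)), and for w ≠ w* define R(w) = (σ(w) - σ(w*))/(w - w*). If w_t > w* and w_{t+1} = T(w_t) < w*, then w_{t+2} = T(w_{t+1}) satisfies (w_{t+2} - w*)/(w_t - w*) ≤ 1 - γ(2-γ)·R(w_t)²/σ'(w*)² < 1. -/

import Mathlib

/-!
Write `p = σ(w*)`, `s = σ'(w*) = p(1 - p)`, `u = σ(w_t) - p` and `e = w_t - w*`. The key fact is
that the slope of a chord of `σ` is at most `m(1 - m)`, where `m` is the mean of the values of `σ`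
at its endpoints; as long as `m ≥ p ≥ 1/2` this is at most `s`. Applied three times it gives
`R(w_t) < s`, then `σ(w_{t+1}) + σ(w_t) ≥ 2p` (the first step, of length `γu/s < 2u/s`, cannot
jump past the point where `σ = 2p - σ(w_t)`), and then `σ(w_t) - σ(w_{t+1}) ≤ γu`. Hence
`w_{t+2} - w* ≤ e - γ(2 - γ)u/s = e(1 - γ(2 - γ)ρ)` with `ρ = R(w_t)/s ∈ (0, 1)`, and `ρ² ≤ ρ`.
-/

noncomputable def sigmoid (w : ℝ) : ℝ := 1 / (1 + Real.exp (-w))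

theorem sigmoid_eq_real_sigmoid : sigmoid = Real.sigmoid := by
  funext w
  rw [sigmoid, Real.sigmoid_def, one_div]

namespace Real

theorem two_mul_le_log_one_add_sub_log_one_sub {t : ℝ} (h0 : 0 ≤ t) (h1 : t < 1) :
    2 * t ≤ log (1 + t) - log (1 - t) := by
  have hsum := hasSum_log_sub_log_of_abs_lt_one (abs_lt.2 ⟨by linarith, h1⟩)
  simpa using le_hasSum hsum 0 fun k _ ↦ by positivity

theorem two_mul_div_le_log_add_sub_log_sub {c d : ℝ} (hd : 0 ≤ d) (hdc : d < c) :
    2 * d / c ≤ log (c + d) - log (c - d) := by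
  have hc : 0 < c := hd.trans_lt hdc
  have ht1 : d / c < 1 := (div_lt_one hc).2 hdc
  have hplus : c + d = c * (1 + d / c) := by field_simp
  have hminus : c - d = c * (1 - d / c) := by field_simp
  rw [hplus, hminus, log_mul hc.ne' (by positivity), log_mul hc.ne' (by linarith), mul_div_assoc]
  linarith [two_mul_le_log_one_add_sub_log_one_sub (div_nonneg hd hc.le) ht1]

theorem log_sigmoid_sub_log_one_sub_sigmoid (x : ℝ) :
    log (sigmoid x) - log (1 - sigmoid x) = x := by
  have h := sigmoid_mul_rexp_neg (-x)
  rw [neg_neg] at h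
  rw [← sigmoid_neg, ← h, log_mul (sigmoid_pos _).ne' (exp_pos x).ne', log_exp]
  ring

/-- `b - a = logit σ(b) - logit σ(a)`, and with `σ(a), σ(b) = m ∓ d` the logit difference splits
into two instances of `log ((1 + t) / (1 - t)) ≥ 2t`. -/
theorem sigmoid_sub_sigmoid_le {a b : ℝ} (hab : a ≤ b) :
    sigmoid b - sigmoid a ≤
      (b - a) * ((sigmoid a + sigmoid b) / 2 * (1 - (sigmoid a + sigmoid b) / 2)) := by
  set m := (sigmoid a + sigmoid b) / 2
  set d := (sigmoid b - sigmoid a) / 2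
  have hd : 0 ≤ d := by have := sigmoid_le hab; simp only [d]; linarith
  have hma : m - d = sigmoid a := by simp only [m, d]; ring
  have hmb : m + d = sigmoid b := by simp only [m, d]; ring
  have hm : 0 < m := by linarith [sigmoid_pos a]
  have hm1 : 0 < 1 - m := by linarith [sigmoid_lt_one b]
  have hlog : b - a = (log (m + d) - log (m - d)) + (log (1 - m + d) - log (1 - m - d)) := by
    rw [← log_sigmoid_sub_log_one_sub_sigmoid a, ← log_sigmoid_sub_log_one_sub_sigmoid b,
      ← hma, ← hmb]
    ring_nf
  have h1 := two_mul_div_le_log_add_sub_log_sub hd (by linarith [sigmoid_pos a] : d < m)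
  have h2 := two_mul_div_le_log_add_sub_log_sub hd
    (by linarith [sigmoid_lt_one b] : d < 1 - m)
  calc sigmoid b - sigmoid a = (2 * d / m + 2 * d / (1 - m)) * (m * (1 - m)) := by
        field_simp; simp only [d]; ring
    _ ≤ (b - a) * (m * (1 - m)) := by rw [hlog]; gcongr

theorem deriv_sigmoid_pos (x : ℝ) : 0 < deriv sigmoid x := by
  rw [deriv_sigmoid]
  exact mul_pos (sigmoid_pos x) (sub_pos.2 (sigmoid_lt_one x))

theorem mul_one_sub_le_deriv_sigmoid {x y : ℝ} (hx : 0 ≤ x) (hxy : sigmoid x ≤ y) :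
    y * (1 - y) ≤ deriv sigmoid x := by
  have : 1 / 2 ≤ sigmoid x := by simpa using sigmoid_le hx
  rw [deriv_sigmoid]
  nlinarith

theorem mul_one_sub_lt_deriv_sigmoid {x y : ℝ} (hx : 0 ≤ x) (hxy : sigmoid x < y) :
    y * (1 - y) < deriv sigmoid x := by
  have : 1 / 2 ≤ sigmoid x := by simpa using sigmoid_le hx
  rw [deriv_sigmoid]
  nlinarith

theorem sigmoid_sub_sigmoid_le_mul_deriv {a b c : ℝ} (hc : 0 ≤ c) (hab : a ≤ b)
    (hmid : 2 * sigmoid c ≤ sigmoid a + sigmoid b) :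
    sigmoid b - sigmoid a ≤ (b - a) * deriv sigmoid c :=
  (sigmoid_sub_sigmoid_le hab).trans <|
    mul_le_mul_of_nonneg_left (mul_one_sub_le_deriv_sigmoid hc (by linarith)) (by linarith)

theorem sigmoid_sub_sigmoid_lt_mul_deriv {b c : ℝ} (hc : 0 ≤ c) (hcb : c < b) :
    sigmoid b - sigmoid c < (b - c) * deriv sigmoid c :=
  (sigmoid_sub_sigmoid_le hcb.le).trans_lt <|
    mul_lt_mul_of_pos_left (mul_one_sub_lt_deriv_sigmoid hc (by linarith [sigmoid_lt hcb]))
      (by linarith)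

theorem two_mul_sigmoid_le_sigmoid_add_sigmoid {b c v : ℝ} (hc : 0 ≤ c) (hcb : c ≤ b)
    (hstep : (b - v) * deriv sigmoid c ≤ 2 * (sigmoid b - sigmoid c)) :
    2 * sigmoid c ≤ sigmoid v + sigmoid b := by
  by_contra! hlt
  have hbc := sigmoid_le hcb
  obtain ⟨a, ha⟩ : 2 * sigmoid c - sigmoid b ∈ Set.range sigmoid := by
    rw [range_sigmoid]
    exact ⟨by linarith [sigmoid_pos v], by linarith [sigmoid_lt_one c]⟩
  have hva : v < a := sigmoid_lt_iff.1 (by linarith)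
  have hab : a ≤ b := sigmoid_le_iff.1 (by linarith)
  have hs := deriv_sigmoid_pos c
  have hchord := sigmoid_sub_sigmoid_le_mul_deriv hc hab (by linarith)
  nlinarith

end Real

theorem two_step_contraction_from_right_general
    (wstar γ : ℝ) (hwstar : 0 < wstar) (hγ1 : 1 < γ) (hγ2 : γ < 2)
    (T : ℝ → ℝ)
    (hT : ∀ w, T w = w - (γ / deriv sigmoid wstar) * (sigmoid w - sigmoid wstar))
    (R : ℝ → ℝ)
    (hR : ∀ w, w ≠ wstar → R w = (sigmoid w - sigmoid wstar) / (w - wstar))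
    (wt : ℝ) (hwt : wstar < wt) :
    (T (T wt) - wstar) / (wt - wstar)
      ≤ 1 - γ * (2 - γ) * (R wt) ^ 2 / (deriv sigmoid wstar) ^ 2 ∧
    1 - γ * (2 - γ) * (R wt) ^ 2 / (deriv sigmoid wstar) ^ 2 < 1 := by
  rw [sigmoid_eq_real_sigmoid] at hT hR ⊢
  set s := deriv Real.sigmoid wstar
  set u := Real.sigmoid wt - Real.sigmoid wstar
  set e := wt - wstar
  have hs : 0 < s := Real.deriv_sigmoid_pos wstar
  have he : 0 < e := by linarith
  have hu : 0 < u := by linarith [Real.sigmoid_lt hwt]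
  have hRwt : R wt = u / e := hR wt hwt.ne'
  have hstep : (wt - T wt) * s = γ * u := by rw [hT]; field_simp; ring
  have hsecant : u < e * s := Real.sigmoid_sub_sigmoid_lt_mul_deriv hwstar.le hwt
  have hmid : 2 * Real.sigmoid wstar ≤ Real.sigmoid (T wt) + Real.sigmoid wt :=
    Real.two_mul_sigmoid_le_sigmoid_add_sigmoid hwstar.le hwt.le (by nlinarith)
  have hchord : Real.sigmoid wt - Real.sigmoid (T wt) ≤ (wt - T wt) * s :=
    Real.sigmoid_sub_sigmoid_le_mul_deriv hwstar.le (by nlinarith) hmid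
  have hγu : γ * (1 - γ) * u ≤ γ * (Real.sigmoid (T wt) - Real.sigmoid wstar) := by nlinarith
  have hρ : 0 < R wt / s := by rw [hRwt]; positivity
  have hρ1 : R wt / s < 1 := by rwa [hRwt, div_div, div_lt_one (by positivity)]
  have hgap : 0 < γ * (2 - γ) := mul_pos (by linarith) (by linarith)
  rw [show γ * (2 - γ) * R wt ^ 2 / s ^ 2 = γ * (2 - γ) * (R wt / s) ^ 2 by ring]
  refine ⟨?_, sub_lt_self 1 (by positivity)⟩
  calc (T (T wt) - wstar) / e
        = (e - γ * u / s - γ * (Real.sigmoid (T wt) - Real.sigmoid wstar) / s) / e := by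
          rw [hT (T wt), hT wt]; ring
    _ ≤ (e - γ * u / s - γ * (1 - γ) * u / s) / e := by gcongr
    _ = 1 - γ * (2 - γ) * (R wt / s) := by rw [hRwt]; field_simp; ring
    _ ≤ 1 - γ * (2 - γ) * (R wt / s) ^ 2 := by gcongr; nlinarith

theorem two_step_contraction_from_right
    (wstar γ : ℝ) (hwstar : 0 < wstar) (hγ1 : 1 < γ) (hγ2 : γ < 2)
    (T : ℝ → ℝ)
    (hT : ∀ w, T w = w - (γ / deriv sigmoid wstar) * (sigmoid w - sigmoid wstar))
    (R : ℝ → ℝ)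
    (hR : ∀ w, w ≠ wstar → R w = (sigmoid w - sigmoid wstar) / (w - wstar))
    (wt : ℝ) (hwt : wstar < wt) (hcross : T wt < wstar) :
    (T (T wt) - wstar) / (wt - wstar)
      ≤ 1 - γ * (2 - γ) * (R wt) ^ 2 / (deriv sigmoid wstar) ^ 2 ∧
    1 - γ * (2 - γ) * (R wt) ^ 2 / (deriv sigmoid wstar) ^ 2 < 1 :=
  two_step_contraction_from_right_general wstar γ hwstar hγ1 hγ2 T hT R hR wt hwt
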